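/- arXiv:2502.15170 — 8 statements merged into one kernel-verified Lean document; each statement's English description precedes it below -/
import Mathlib

section
/- Let K be a field, and let q, u, v, x, y ∈ K be units with q⁴ ≠ 1, xy ≠ 1, x⁻¹y ≠ 1. Suppose x + x⁻¹ = 2(qu + q⁻¹u⁻¹)/(q + q⁻¹) and y + y⁻¹ = 2(qv + q⁻¹v⁻¹)/(q + q⁻¹). Then x⁻¹y/(x⁻¹y − 1)² + xy/(xy − 1)² = 1/(q − q⁻¹)² holds if and only if at least one of the following four equations holds: v = q²u, v = q⁻²u, v = u⁻¹, or v = q⁻⁴u⁻¹. -/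
/-!
Write `J z = z + z⁻¹`. Since `z / (z - 1) ^ 2 = 1 / (J z - 2)`, and the numbers `J (x⁻¹ y)`, `J (x y)`
have sum `J x * J y` and satisfy `(J (x⁻¹ y) - p) * (J (x y) - p) = J x ^ 2 + J y ^ 2 - p J x J y + p ^ 2 - 4`,
the case `p = 2` turns the left-hand side into `(J x J y - 4) / (J x - J y) ^ 2`. After substituting
`J x = 2 J (q u) / J q` and `J y = 2 J (q v) / J q`, the equation becomes
`(J ((q u)⁻¹ q v) - J (q²)) * (J (q u q v) - J (q²)) = 0`, the same identity with `p = J (q²)`,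
and `J a = J b` exactly when `a = b` or `a = b⁻¹`.
-/

section Joukowski

variable {K : Type*} [Field K]

def joukowski (z : K) : K := z + z⁻¹

lemma joukowski_sub_two {z : K} (hz : z ≠ 0) : joukowski z - 2 = (z - 1) ^ 2 / z := by
  rw [joukowski]; field_simp; ring

lemma div_sub_one_sq_eq_inv_joukowski_sub_two {z : K} (hz : z ≠ 0) :
    z / (z - 1) ^ 2 = (joukowski z - 2)⁻¹ := by
  rw [joukowski_sub_two hz, inv_div]

lemma joukowski_sub_two_ne_zero {z : K} (hz : z ≠ 0) (h1 : z ≠ 1) : joukowski z - 2 ≠ 0 := by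
  rw [joukowski_sub_two hz]
  exact div_ne_zero (pow_ne_zero 2 (sub_ne_zero.mpr h1)) hz

lemma joukowski_sq {z : K} (hz : z ≠ 0) : joukowski z ^ 2 = joukowski (z ^ 2) + 2 := by
  simp only [joukowski]; field_simp; ring

lemma sub_inv_sq_eq_joukowski_sq_sub_two {z : K} (hz : z ≠ 0) :
    (z - z⁻¹) ^ 2 = joukowski (z ^ 2) - 2 := by
  simp only [joukowski]; field_simp; ring

lemma joukowski_inv_mul_add_joukowski_mul {x : K} (hx : x ≠ 0) (y : K) :
    joukowski (x⁻¹ * y) + joukowski (x * y) = joukowski x * joukowski y := by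
  simp only [joukowski, mul_inv, inv_inv]; field_simp; ring

lemma joukowski_inv_mul_sub_mul_joukowski_mul_sub {x y : K} (hx : x ≠ 0) (hy : y ≠ 0) (p : K) :
    (joukowski (x⁻¹ * y) - p) * (joukowski (x * y) - p) =
      joukowski x ^ 2 + joukowski y ^ 2 - p * joukowski x * joukowski y + p ^ 2 - 4 := by
  simp only [joukowski, mul_inv, inv_inv]; field_simp; ring

lemma joukowski_eq_joukowski_iff {z w : K} (hz : z ≠ 0) (hw : w ≠ 0) :
    joukowski z = joukowski w ↔ z = w ∨ z = w⁻¹ := by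
  have key : (z - w) * (z - w⁻¹) = z * (joukowski z - joukowski w) := by
    simp only [joukowski]; field_simp; ring
  rw [← sub_eq_zero, ← mul_eq_zero_iff_left hz, ← key, mul_eq_zero, sub_eq_zero, sub_eq_zero]

lemma joukowski_sub_sq {x y : K} (hx : x ≠ 0) (hy : y ≠ 0) :
    (joukowski x - joukowski y) ^ 2 = (joukowski (x⁻¹ * y) - 2) * (joukowski (x * y) - 2) := by
  rw [joukowski_inv_mul_sub_mul_joukowski_mul_sub hx hy]; ring

lemma inv_mul_div_sq_add_mul_div_sq {x y : K} (hx : x ≠ 0) (hy : y ≠ 0) (hxy : x * y ≠ 1)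
    (hxy' : x⁻¹ * y ≠ 1) :
    x⁻¹ * y / (x⁻¹ * y - 1) ^ 2 + x * y / (x * y - 1) ^ 2 =
      (joukowski x * joukowski y - 4) / (joukowski x - joukowski y) ^ 2 := by
  rw [div_sub_one_sq_eq_inv_joukowski_sub_two (mul_ne_zero (inv_ne_zero hx) hy),
    div_sub_one_sq_eq_inv_joukowski_sub_two (mul_ne_zero hx hy),
    inv_add_inv (joukowski_sub_two_ne_zero (mul_ne_zero (inv_ne_zero hx) hy) hxy')
      (joukowski_sub_two_ne_zero (mul_ne_zero hx hy) hxy),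
    joukowski_sub_sq hx hy, ← joukowski_inv_mul_add_joukowski_mul hx]
  ring

lemma joukowski_sub_ne_zero {x y : K} (hx : x ≠ 0) (hy : y ≠ 0) (hxy : x * y ≠ 1)
    (hxy' : x⁻¹ * y ≠ 1) : joukowski x - joukowski y ≠ 0 := by
  rw [← pow_ne_zero_iff two_ne_zero, joukowski_sub_sq hx hy]
  exact mul_ne_zero (joukowski_sub_two_ne_zero (mul_ne_zero (inv_ne_zero hx) hy) hxy')
    (joukowski_sub_two_ne_zero (mul_ne_zero hx hy) hxy)

lemma sub_two_mul_mul_sub_four_eq_sub_sq_iff {a b c s t p : K}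
    (h2 : (2 : K) ≠ 0) (hc : c ≠ 0) (hcp : c ^ 2 = p + 2) (ha : a = 2 * s / c)
    (hb : b = 2 * t / c) :
    (p - 2) * (a * b - 4) = (a - b) ^ 2 ↔ s ^ 2 + t ^ 2 - p * s * t + p ^ 2 - 4 = 0 := by
  have key : (a - b) ^ 2 - (p - 2) * (a * b - 4) =
      4 / c ^ 2 * (s ^ 2 + t ^ 2 - p * s * t + p ^ 2 - 4) := by
    subst ha hb
    field_simp
    linear_combination (4 * (p - 2)) * hcp
  rw [eq_comm, ← sub_eq_zero, key, mul_eq_zero, or_iff_right]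
  have h4 : (4 : K) ≠ 0 := by
    rw [show (4 : K) = 2 * 2 by norm_num]; exact mul_ne_zero h2 h2
  exact div_ne_zero h4 (pow_ne_zero 2 hc)

end Joukowski

theorem stmt_3 (K : Type*) [Field K] (h2 : (2 : K) ≠ 0)
    (q u v x y : K) (hq : q ≠ 0) (hu : u ≠ 0) (hv : v ≠ 0) (hx : x ≠ 0) (hy : y ≠ 0)
    (hq4 : q ^ 4 ≠ 1) (hxy : x * y ≠ 1) (hxy' : x⁻¹ * y ≠ 1)
    (hxu : x + x⁻¹ = 2 * (q * u + q⁻¹ * u⁻¹) / (q + q⁻¹))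
    (hyv : y + y⁻¹ = 2 * (q * v + q⁻¹ * v⁻¹) / (q + q⁻¹)) :
    x⁻¹ * y / (x⁻¹ * y - 1) ^ 2 + x * y / (x * y - 1) ^ 2 = 1 / (q - q⁻¹) ^ 2 ↔
      v = q ^ 2 * u ∨ v = (q⁻¹) ^ 2 * u ∨ v = u⁻¹ ∨ v = (q⁻¹) ^ 4 * u⁻¹ := by
  obtain ⟨hq_sub, hq_add⟩ : q ^ 2 - 1 ≠ 0 ∧ q ^ 2 + 1 ≠ 0 := by
    rw [← mul_ne_zero_iff]; contrapose! hq4; linear_combination hq4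
  have hd : q - q⁻¹ ≠ 0 := by field_simp; exact div_ne_zero hq_sub hq
  have hc : joukowski q ≠ 0 := by rw [joukowski]; field_simp; exact div_ne_zero hq_add hq
  have hJx : joukowski x = 2 * joukowski (q * u) / joukowski q := by
    simpa only [joukowski, mul_inv] using hxu
  have hJy : joukowski y = 2 * joukowski (q * v) / joukowski q := by
    simpa only [joukowski, mul_inv] using hyv
  have hqu : q * u ≠ 0 := mul_ne_zero hq hu
  have hqv : q * v ≠ 0 := mul_ne_zero hq hv
  rw [inv_mul_div_sq_add_mul_div_sq hx hy hxy hxy',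
    div_eq_div_iff (pow_ne_zero 2 (joukowski_sub_ne_zero hx hy hxy hxy')) (pow_ne_zero 2 hd),
    one_mul, sub_inv_sq_eq_joukowski_sq_sub_two hq, mul_comm,
    sub_two_mul_mul_sub_four_eq_sub_sq_iff h2 hc (joukowski_sq hq) hJx hJy,
    ← joukowski_inv_mul_sub_mul_joukowski_mul_sub hqu hqv, mul_eq_zero, sub_eq_zero, sub_eq_zero,
    joukowski_eq_joukowski_iff (mul_ne_zero (inv_ne_zero hqu) hqv) (pow_ne_zero 2 hq),
    joukowski_eq_joukowski_iff (mul_ne_zero hqu hqv) (pow_ne_zero 2 hq), or_assoc]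
  refine or_congr ?_ (or_congr ?_ (or_congr ?_ ?_)) <;> field_simp
end

section
/- Let K be a field of characteristic ≠ 2 and let u, v, x, y ∈ K satisfy x² = u(u + 1), y² = v(v + 1), and y ≠ x, y ≠ −x. Then 1/(x − y)² + 1/(x + y)² = 1 holds if and only if at least one of the following holds: u − v = 1, u − v = −1, u + v = 0, or u + v = −2. -/
theorem stmt_4 (K : Type*) [Field K] (h2 : (2 : K) ≠ 0)
    (u v x y : K) (hx : x ^ 2 = u * (u + 1)) (hy : y ^ 2 = v * (v + 1))
    (hne : y ≠ x) (hne' : y ≠ -x) :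
    1 / (x - y) ^ 2 + 1 / (x + y) ^ 2 = 1 ↔
      u - v = 1 ∨ u - v = -1 ∨ u + v = 0 ∨ u + v = -2 := by
  have h1 : x - y ≠ 0 := sub_ne_zero.mpr (Ne.symm hne)
  have h3 : x + y ≠ 0 := fun h => hne' (by linear_combination h)
  have key : 1 / (x - y) ^ 2 + 1 / (x + y) ^ 2 = 1 ↔
      (u - v - 1) * ((u - v + 1) * ((u + v) * (u + v + 2))) = 0 := by
    rw [div_add_div _ _ (pow_ne_zero 2 h1) (pow_ne_zero 2 h3),
      div_eq_one_iff_eq (mul_ne_zero (pow_ne_zero 2 h1) (pow_ne_zero 2 h3))]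
    constructor
    · intro h
      linear_combination -h + (-x^2 + 2*y^2 + 2 - u^2 - u) * hx
        + (-y^2 + 2*u^2 + 2*u + 2 - v^2 - v) * hy
    · intro h
      linear_combination -h + (-x^2 + 2*y^2 + 2 - u^2 - u) * hx
        + (-y^2 + 2*u^2 + 2*u + 2 - v^2 - v) * hy
  rw [key, mul_eq_zero, mul_eq_zero, mul_eq_zero, sub_eq_zero,
    ← eq_neg_iff_add_eq_zero, add_eq_zero_iff_eq_neg, eq_neg_iff_add_eq_zero]
  constructor
  · rintro (h | h | h | h)
    · exact Or.inl h
    · exact Or.inr (Or.inl (by linear_combination h))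
    · exact Or.inr (Or.inr (Or.inl (by linear_combination h)))
    · exact Or.inr (Or.inr (Or.inr (by linear_combination h)))
  · rintro (h | h | h | h)
    · exact Or.inl h
    · exact Or.inr (Or.inl (by linear_combination h))
    · exact Or.inr (Or.inr (Or.inl (by linear_combination h)))
    · exact Or.inr (Or.inr (Or.inr (by linear_combination h)))
end

section
/- Let K be a field, ε ∈ K, and A an associative unital K-algebra with elements T, C₁, C₂ satisfying T² = εT + 1, C₁² = C₂² = 1, C₁C₂ = −C₂C₁, T C₁ = C₂ T, and T C₂ = C₁ T − ε(C₁ − C₂). For units x, y ∈ K with xy ≠ 1 and x⁻¹y ≠ 1 define Φ(x,y) := T + (ε/(x⁻¹y − 1))·1 − (ε/(xy − 1))·C₁C₂. Then Φ(x,y)·Φ(y,x) = (1 − ε²·(x⁻¹y/(x⁻¹y − 1)² + xy/(xy − 1)²))·1. -/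
/-- The rank-one Jones–Nazarov intertwining element
`Φ(x,y) = T + (ε/(x⁻¹y−1))·1 − (ε/(xy−1))·C₁C₂`. -/
noncomputable def PhiJN {K : Type*} [Field K] {A : Type*} [Ring A] [Algebra K A]
    (T C₁ C₂ : A) (ε x y : K) : A :=
  T + (ε / (x⁻¹ * y - 1)) • (1 : A) - (ε / (x * y - 1)) • (C₁ * C₂)

set_option maxHeartbeats 1000000 in
theorem stmt_12 (K : Type*) [Field K] (A : Type*) [Ring A] [Algebra K A]
    (ε : K) (T C₁ C₂ : A)
    (hT : T * T = ε • T + 1)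
    (hC1 : C₁ * C₁ = 1) (hC2 : C₂ * C₂ = 1) (hCC : C₁ * C₂ = -(C₂ * C₁))
    (hTC1 : T * C₁ = C₂ * T) (hTC2 : T * C₂ = C₁ * T - ε • (C₁ - C₂))
    (x y : K) (hx : x ≠ 0) (hy : y ≠ 0) (hxy : x * y ≠ 1) (hxy' : x⁻¹ * y ≠ 1) :
    PhiJN T C₁ C₂ ε x y * PhiJN T C₁ C₂ ε y x
      = (1 - ε ^ 2 * (x⁻¹ * y / (x⁻¹ * y - 1) ^ 2 + x * y / (x * y - 1) ^ 2)) • (1 : A) := by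
  have h2 : C₂ * C₁ = -(C₁ * C₂) := by rw [hCC, neg_neg]
  have hTD : T * (C₁ * C₂) = ε • (1 : A) + ε • (C₁ * C₂) - (C₁ * C₂) * T := by
    calc T * (C₁ * C₂) = (T * C₁) * C₂ := by rw [mul_assoc]
    _ = C₂ * (T * C₂) := by rw [hTC1, mul_assoc]
    _ = C₂ * (C₁ * T) - ε • (C₂ * (C₁ - C₂)) := by rw [hTC2, mul_sub, mul_smul_comm]
    _ = -(C₁ * C₂ * T) - ε • (-(C₁ * C₂) - 1) := by
        rw [mul_sub, hC2, ← mul_assoc, h2, neg_mul]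
    _ = ε • (1 : A) + ε • (C₁ * C₂) - (C₁ * C₂) * T := by module
  have hDD : (C₁ * C₂) * (C₁ * C₂) = -1 := by
    calc (C₁ * C₂) * (C₁ * C₂) = C₁ * (C₂ * C₁) * C₂ := by noncomm_ring
    _ = C₁ * (-(C₁ * C₂)) * C₂ := by rw [h2]
    _ = -((C₁ * C₁) * (C₂ * C₂)) := by noncomm_ring
    _ = -1 := by rw [hC1, hC2, one_mul]
  have hu : x⁻¹ * y - 1 ≠ 0 := sub_ne_zero.mpr hxy'
  have hv : x * y - 1 ≠ 0 := sub_ne_zero.mpr hxy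
  have hw : y⁻¹ * x - 1 ≠ 0 := by
    intro h
    have h1 : y⁻¹ * x = 1 := sub_eq_zero.mp h
    have hx' : x = y := by field_simp at h1; exact h1
    exact hxy' (by rw [hx', inv_mul_cancel₀ hy])
  have hd : x - y ≠ 0 := by
    intro h
    exact hxy' (by rw [sub_eq_zero.mp h, inv_mul_cancel₀ hy])
  have hd' : y - x ≠ 0 := fun h => hd (by linear_combination -h)
  have hd'' : -x + y ≠ 0 := fun h => hd (by linear_combination -h)
  have hq : (1:K) - x * y * 2 + x ^ 2 * y ^ 2 ≠ 0 := fun h =>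
    pow_ne_zero 2 hv (by linear_combination h)
  have hr : (-1:K) + x * y ≠ 0 := fun h => hv (by linear_combination h)
  have hs : -y - y * x ^ 2 + y ^ 2 * x + x ≠ 0 := fun h =>
    mul_ne_zero hd (fun h' : (1:K) - x * y = 0 => hv (by linear_combination -h'))
      (by linear_combination h)
  unfold PhiJN
  rw [show y * x = x * y from mul_comm y x]
  set D := C₁ * C₂ with hD
  set a := ε / (x⁻¹ * y - 1) with ha
  set a' := ε / (y⁻¹ * x - 1) with ha'
  set b := ε / (x * y - 1) with hb
  have key : (T + a • (1:A) - b • D) * (T + a' • (1:A) - b • D)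
      = (ε + a + a') • T + (1 + a * a' - ε * b - b * b) • (1:A)
        - (b * (ε + a + a')) • D := by
    simp only [mul_add, add_mul, mul_sub, sub_mul, smul_mul_assoc, mul_smul_comm,
      smul_smul, mul_one, one_mul, hT, hTD, hDD]
    module
  have hsum : ε + a + a' = 0 := by
    rw [ha, ha']
    field_simp
    ring
  have hfin : 1 + a * a' - ε * b - b * b
      = 1 - ε ^ 2 * (x⁻¹ * y / (x⁻¹ * y - 1) ^ 2 + x * y / (x * y - 1) ^ 2) := by
    rw [ha, ha', hb]
    field_simp
    ring
  rw [key, hsum, zero_smul, mul_zero, zero_smul, sub_zero, zero_add, hfin]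
end

section
/- With the same hypotheses and notation as the rank-one Hecke–Clifford setting (T² = εT + 1, C₁² = C₂² = 1, C₁C₂ = −C₂C₁, TC₁ = C₂T, TC₂ = C₁T − ε(C₁ − C₂); x, y units with xy ≠ 1, x⁻¹y ≠ 1, and additionally x ≠ y), the element Φ(x,y) := T + (ε/(x⁻¹y − 1))·1 − (ε/(xy − 1))·C₁C₂ satisfies Φ(x,y)² = −ε·((x + y)/(x − y))·Φ(x,y) + (1 − ε²·(x⁻¹y/(x⁻¹y − 1)² + xy/(xy − 1)²))·1. -/
theorem stmt_13 (K : Type*) [Field K] (A : Type*) [Ring A] [Algebra K A]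
    (ε : K) (T C₁ C₂ : A)
    (hT : T * T = ε • T + 1)
    (hC1 : C₁ * C₁ = 1) (hC2 : C₂ * C₂ = 1) (hCC : C₁ * C₂ = -(C₂ * C₁))
    (hTC1 : T * C₁ = C₂ * T) (hTC2 : T * C₂ = C₁ * T - ε • (C₁ - C₂))
    (x y : K) (hx : x ≠ 0) (hy : y ≠ 0) (hxy : x * y ≠ 1) (hxy' : x⁻¹ * y ≠ 1)
    (hne : x ≠ y) :
    PhiJN T C₁ C₂ ε x y * PhiJN T C₁ C₂ ε x y
      = (-(ε * ((x + y) / (x - y)))) • PhiJN T C₁ C₂ ε x y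
        + (1 - ε ^ 2 * (x⁻¹ * y / (x⁻¹ * y - 1) ^ 2 + x * y / (x * y - 1) ^ 2)) • (1 : A) := by
  have hu : x⁻¹ * y - 1 ≠ 0 := sub_ne_zero.mpr hxy'
  have hv : x * y - 1 ≠ 0 := sub_ne_zero.mpr hxy
  have hxmy : x - y ≠ 0 := sub_ne_zero.mpr hne
  have hymx : y - x ≠ 0 := sub_ne_zero.mpr (Ne.symm hne)
  have hC21 : C₂ * C₁ = -(C₁ * C₂) := by rw [hCC, neg_neg]
  set U : A := C₁ * C₂ with hU
  have hUU : U * U = -1 := by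
    have h : U * U = C₁ * (C₂ * C₁) * C₂ := by rw [hU]; noncomm_ring
    rw [h, hC21]
    simp [hU, mul_neg, neg_mul, ← mul_assoc, hC1, hC2]
  have hTU : T * U = -(U * T) + ε • U + ε • (1 : A) := by
    have h1 : T * U = C₂ * (T * C₂) := by rw [hU, ← mul_assoc, hTC1, mul_assoc]
    rw [h1, hTC2, mul_sub, ← mul_assoc, hC21, smul_sub, mul_sub,
      mul_smul_comm, mul_smul_comm, hC21, hC2, smul_neg]
    simp only [neg_mul]
    abel
  set a : K := ε / (x⁻¹ * y - 1) with ha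
  set b : K := ε / (x * y - 1) with hb
  clear_value U a b
  have key1 : ε + 2 * a = -(ε * ((x + y) / (x - y))) := by
    rw [ha]; field_simp; ring
  have q1 : ε * a + a * a = ε ^ 2 * (x⁻¹ * y / (x⁻¹ * y - 1) ^ 2) := by
    rw [ha]; field_simp; ring
  have q2 : ε * b + b * b = ε ^ 2 * (x * y / (x * y - 1) ^ 2) := by
    rw [hb]; field_simp; ring
  have key2 : (1 : K) + a * a - b * ε - b * b
      = -(ε * ((x + y) / (x - y))) * a
        + (1 - ε ^ 2 * (x⁻¹ * y / (x⁻¹ * y - 1) ^ 2 + x * y / (x * y - 1) ^ 2)) := by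
    linear_combination a * key1 - q1 - q2
  have key3 : -(b * ε) - 2 * (a * b) = -(-(ε * ((x + y) / (x - y))) * b) := by
    linear_combination (-b) * key1
  have expand : PhiJN T C₁ C₂ ε x y * PhiJN T C₁ C₂ ε x y
      = T * T + (2 * a) • T + (a * a) • (1 : A) - b • (T * U) - b • (U * T)
        - (2 * (a * b)) • U + (b * b) • (U * U) := by
    rw [PhiJN, ← hU, ← ha, ← hb]
    simp only [sub_mul, mul_sub, add_mul, mul_add, smul_mul_assoc, mul_smul_comm,
      smul_smul, one_mul, mul_one]
    module
  rw [expand, hT, hTU, hUU, PhiJN, ← hU, ← ha, ← hb]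
  match_scalars
  · linear_combination key1
  · linear_combination key2
  · linear_combination key3 + b * key1
  · linear_combination key3
end

section
/- With the rank-one Hecke–Clifford relations (T² = εT + 1, C₁² = C₂² = 1, C₁C₂ = −C₂C₁, TC₁ = C₂T, TC₂ = C₁T − ε(C₁ − C₂)) and Φ(x,y) := T + (ε/(x⁻¹y − 1))·1 − (ε/(xy − 1))·C₁C₂ defined for units x, y ∈ K with xy ≠ 1 and x⁻¹y ≠ 1, one has C₁·Φ(x,y) = Φ(x, y⁻¹)·C₂. -/
theorem stmt_14 (K : Type*) [Field K] (A : Type*) [Ring A] [Algebra K A]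
    (ε : K) (T C₁ C₂ : A)
    (hT : T * T = ε • T + 1)
    (hC1 : C₁ * C₁ = 1) (hC2 : C₂ * C₂ = 1) (hCC : C₁ * C₂ = -(C₂ * C₁))
    (hTC1 : T * C₁ = C₂ * T) (hTC2 : T * C₂ = C₁ * T - ε • (C₁ - C₂))
    (x y : K) (hx : x ≠ 0) (hy : y ≠ 0) (hxy : x * y ≠ 1) (hxy' : x⁻¹ * y ≠ 1) :
    C₁ * PhiJN T C₁ C₂ ε x y = PhiJN T C₁ C₂ ε x y⁻¹ * C₂ := by
  have h1 : x⁻¹ * y - 1 ≠ 0 := sub_ne_zero.2 hxy'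
  have h2 : x * y - 1 ≠ 0 := sub_ne_zero.2 hxy
  have h3 : x * y⁻¹ - 1 ≠ 0 := by
    rw [sub_ne_zero]
    intro h
    apply hxy'
    have hx_eq : x = y := by field_simp at h; exact h
    rw [hx_eq, inv_mul_cancel₀ hy]
  have h4 : x⁻¹ * y⁻¹ - 1 ≠ 0 := by
    rw [sub_ne_zero]
    intro h
    apply hxy
    field_simp at h
    exact h.symm
  simp only [PhiJN, mul_sub, sub_mul, mul_add, add_mul, mul_smul_comm, smul_mul_assoc,
    mul_one, one_mul]
  rw [hTC2, ← mul_assoc C₁ C₁ C₂, hC1, one_mul, mul_assoc C₁ C₂ C₂, hC2, mul_one, smul_sub]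
  have hne : y ≠ x := fun h => hxy' (by rw [h, inv_mul_cancel₀ hx])
  have ha : y - x ≠ 0 := sub_ne_zero.2 hne
  have hb : x - y ≠ 0 := sub_ne_zero.2 (Ne.symm hne)
  have hc : (1 : K) - x * y ≠ 0 := fun h => hxy ((sub_eq_zero.1 h).symm)
  match_scalars <;> field_simp <;> ring
end

section
/- Let K be a field of characteristic ≠ 2 and A an associative unital K-algebra with elements s, c₁, c₂ satisfying s² = 1, c₁² = c₂² = 1, c₁c₂ = −c₂c₁, s c₁ = c₂ s, and s c₂ = c₁ s. For x, y ∈ K with y ≠ x and y ≠ −x define φ(x,y) := s + (1/(x − y))·1 + (1/(x + y))·c₁c₂. Then φ(x,y)·φ(y,x) = (1 − 1/(x − y)² − 1/(x + y)²)·1. -/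
/-- The rank-one degenerate (Nazarov) intertwining element
`φ(x,y) = s + (1/(x−y))·1 + (1/(x+y))·c₁c₂`. -/
noncomputable def phiNaz {K : Type*} [Field K] {A : Type*} [Ring A] [Algebra K A]
    (s c₁ c₂ : A) (x y : K) : A :=
  s + (x - y)⁻¹ • (1 : A) + (x + y)⁻¹ • (c₁ * c₂)

theorem stmt_15 (K : Type*) [Field K] (h2 : (2 : K) ≠ 0)
    (A : Type*) [Ring A] [Algebra K A]
    (s c₁ c₂ : A)
    (hs : s * s = 1)
    (hc1 : c₁ * c₁ = 1) (hc2 : c₂ * c₂ = 1) (hcc : c₁ * c₂ = -(c₂ * c₁))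
    (hsc1 : s * c₁ = c₂ * s) (hsc2 : s * c₂ = c₁ * s)
    (x y : K) (hne : y ≠ x) (hne' : y ≠ -x) :
    phiNaz s c₁ c₂ x y * phiNaz s c₁ c₂ y x
      = (1 - 1 / (x - y) ^ 2 - 1 / (x + y) ^ 2) • (1 : A) := by
  have hsu : s * (c₁ * c₂) = -((c₁ * c₂) * s) := by
    calc s * (c₁ * c₂) = (s * c₁) * c₂ := by rw [mul_assoc]
    _ = c₂ * (s * c₂) := by rw [hsc1, mul_assoc]
    _ = (c₂ * c₁) * s := by rw [hsc2, mul_assoc]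
    _ = -((c₁ * c₂) * s) := by rw [hcc, neg_mul, neg_neg]
  have huu : (c₁ * c₂) * (c₁ * c₂) = -1 := by
    calc (c₁ * c₂) * (c₁ * c₂) = c₁ * ((c₂ * c₁) * c₂) := by noncomm_ring
    _ = c₁ * (-(c₁ * c₂) * c₂) := by rw [hcc, neg_neg]
    _ = -1 := by
        rw [neg_mul, mul_neg, mul_assoc, hc2, mul_one, hc1]

  have hyx : (y - x)⁻¹ = -(x - y)⁻¹ := by
    rw [← neg_sub x y, inv_neg]
  have hxy : (y + x)⁻¹ = (x + y)⁻¹ := by rw [add_comm]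
  simp only [phiNaz, hyx, hxy, mul_add, add_mul, smul_mul_assoc, mul_smul_comm,
    smul_smul, hs, hsu, huu, one_mul, mul_one, neg_smul, smul_neg, mul_neg, neg_mul,
    smul_add, neg_neg]
  have ha : (x - y) ≠ 0 := sub_ne_zero.mpr (fun h => hne h.symm)
  have hb : (x + y) ≠ 0 := fun h => hne' (neg_eq_of_add_eq_zero_right h).symm
  rw [sub_smul, sub_smul, one_smul, one_div, one_div, sq, sq, mul_inv, mul_inv]
  module
end

section
/- With the rank-one Sergeev relations (s² = 1, c₁² = c₂² = 1, c₁c₂ = −c₂c₁, sc₁ = c₂s, sc₂ = c₁s) and φ(x,y) := s + (1/(x − y))·1 + (1/(x + y))·c₁c₂ defined for x, y ∈ K with y ≠ ±x, one has φ(x,y)² = (2/(x − y))·φ(x,y) + (1 − 1/(x − y)² − 1/(x + y)²)·1. -/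
theorem stmt_16 (K : Type*) [Field K] (h2 : (2 : K) ≠ 0)
    (A : Type*) [Ring A] [Algebra K A]
    (s c₁ c₂ : A)
    (hs : s * s = 1)
    (hc1 : c₁ * c₁ = 1) (hc2 : c₂ * c₂ = 1) (hcc : c₁ * c₂ = -(c₂ * c₁))
    (hsc1 : s * c₁ = c₂ * s) (hsc2 : s * c₂ = c₁ * s)
    (x y : K) (hne : y ≠ x) (hne' : y ≠ -x) :
    phiNaz s c₁ c₂ x y * phiNaz s c₁ c₂ x y
      = (2 / (x - y)) • phiNaz s c₁ c₂ x y
        + (1 - 1 / (x - y) ^ 2 - 1 / (x + y) ^ 2) • (1 : A) := by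
  have hxy : x - y ≠ 0 := sub_ne_zero.mpr (fun h => hne h.symm)
  have hxy' : x + y ≠ 0 := fun h => hne' (by linear_combination h)
  have hu : (c₁ * c₂) * (c₁ * c₂) = -1 := by
    calc (c₁ * c₂) * (c₁ * c₂) = c₁ * (c₂ * c₁) * c₂ := by noncomm_ring
    _ = c₁ * (-(c₁ * c₂)) * c₂ := by rw [← neg_eq_iff_eq_neg.mpr hcc]
    _ = -((c₁ * c₁) * (c₂ * c₂)) := by noncomm_ring
    _ = -1 := by rw [hc1, hc2, one_mul]
  have hsu : s * (c₁ * c₂) = -((c₁ * c₂) * s) := by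
    calc s * (c₁ * c₂) = (s * c₁) * c₂ := by rw [mul_assoc]
    _ = c₂ * (s * c₂) := by rw [hsc1, mul_assoc]
    _ = (c₂ * c₁) * s := by rw [hsc2, mul_assoc]
    _ = -((c₁ * c₂) * s) := by rw [← neg_eq_iff_eq_neg.mpr hcc, neg_mul]
  unfold phiNaz
  simp only [mul_add, add_mul, smul_mul_assoc, mul_smul_comm, smul_smul, hs, hu, hsu,
    mul_one, one_mul, smul_add, smul_neg, smul_eq_mul]
  match_scalars <;> field_simp <;> ring
end

section
/- Let K be a field of characteristic ≠ 2 and A an associative unital K-algebra with elements s₁, s₂, c₁, c₂, c₃ satisfying: s₁² = s₂² = 1, s₁s₂s₁ = s₂s₁s₂; c_j² = 1 for j = 1,2,3 and c_j c_l = −c_l c_j for j ≠ l; s₁c₁ = c₂s₁, s₁c₂ = c₁s₁, s₁c₃ = c₃s₁; s₂c₂ = c₃s₂, s₂c₃ = c₂s₂, s₂c₁ = c₁s₂. For scalars a, b ∈ K with b ≠ ±a define φ₁(a,b) := s₁ + (1/(a − b))·1 + (1/(a + b))·c₁c₂ and φ₂(a,b) := s₂ + (1/(a − b))·1 + (1/(a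 + b))·c₂c₃. Then for all x, y, z ∈ K with y ≠ ±x, y ≠ ±z, x ≠ ±z: φ₁(x,y)·φ₂(z,y)·φ₁(z,x) = φ₂(z,x)·φ₁(z,y)·φ₂(x,y). -/
set_option maxHeartbeats 4000000 in
theorem stmt_18 (K : Type*) [Field K] (h2 : (2 : K) ≠ 0)
    (A : Type*) [Ring A] [Algebra K A]
    (s₁ s₂ c₁ c₂ c₃ : A)
    (hs1 : s₁ * s₁ = 1) (hs2 : s₂ * s₂ = 1)
    (hbraid : s₁ * s₂ * s₁ = s₂ * s₁ * s₂)
    (hc1 : c₁ * c₁ = 1) (hc2 : c₂ * c₂ = 1) (hc3 : c₃ * c₃ = 1)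
    (hc12 : c₁ * c₂ = -(c₂ * c₁)) (hc13 : c₁ * c₃ = -(c₃ * c₁))
    (hc23 : c₂ * c₃ = -(c₃ * c₂))
    (hs1c1 : s₁ * c₁ = c₂ * s₁) (hs1c2 : s₁ * c₂ = c₁ * s₁) (hs1c3 : s₁ * c₃ = c₃ * s₁)
    (hs2c2 : s₂ * c₂ = c₃ * s₂) (hs2c3 : s₂ * c₃ = c₂ * s₂) (hs2c1 : s₂ * c₁ = c₁ * s₂) :
    ∀ x y z : K, y ≠ x → y ≠ -x → y ≠ z → y ≠ -z → x ≠ z → x ≠ -z →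
      (s₁ + (x - y)⁻¹ • (1 : A) + (x + y)⁻¹ • (c₁ * c₂)) *
        ((s₂ + (z - y)⁻¹ • (1 : A) + (z + y)⁻¹ • (c₂ * c₃)) *
          (s₁ + (z - x)⁻¹ • (1 : A) + (z + x)⁻¹ • (c₁ * c₂)))
      = (s₂ + (z - x)⁻¹ • (1 : A) + (z + x)⁻¹ • (c₂ * c₃)) *
          ((s₁ + (z - y)⁻¹ • (1 : A) + (z + y)⁻¹ • (c₁ * c₂)) *
            (s₂ + (x - y)⁻¹ • (1 : A) + (x + y)⁻¹ • (c₂ * c₃))) := by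
  intro x y z h1 h2' h3 h4 h5 h6
  -- nonzero denominators
  have hxy : x - y ≠ 0 := sub_ne_zero_of_ne h1.symm
  have hxpy : x + y ≠ 0 := fun h => h2' (by linear_combination h)
  have hzy : z - y ≠ 0 := sub_ne_zero_of_ne (fun h => h3 h.symm)
  have hzpy : z + y ≠ 0 := fun h => h4 (by linear_combination h)
  have hzx : z - x ≠ 0 := sub_ne_zero_of_ne (fun h => h5 h.symm)
  have hzpx : z + x ≠ 0 := fun h => h6 (by linear_combination h)
  -- reversed anticommutation
  have hc21 : c₂ * c₁ = -(c₁ * c₂) := by rw [hc12, neg_neg]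
  have hc31 : c₃ * c₁ = -(c₁ * c₃) := by rw [hc13, neg_neg]
  have hc32 : c₃ * c₂ = -(c₂ * c₃) := by rw [hc23, neg_neg]
  -- trailing versions of all rules
  have Hc1 : ∀ t : A, c₁ * (c₁ * t) = t := fun t => by rw [← mul_assoc, hc1, one_mul]
  have Hc2 : ∀ t : A, c₂ * (c₂ * t) = t := fun t => by rw [← mul_assoc, hc2, one_mul]
  have Hc3 : ∀ t : A, c₃ * (c₃ * t) = t := fun t => by rw [← mul_assoc, hc3, one_mul]
  have Hc21 : ∀ t : A, c₂ * (c₁ * t) = -(c₁ * (c₂ * t)) := fun t => by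
    rw [← mul_assoc, hc21, neg_mul, mul_assoc]
  have Hc31 : ∀ t : A, c₃ * (c₁ * t) = -(c₁ * (c₃ * t)) := fun t => by
    rw [← mul_assoc, hc31, neg_mul, mul_assoc]
  have Hc32 : ∀ t : A, c₃ * (c₂ * t) = -(c₂ * (c₃ * t)) := fun t => by
    rw [← mul_assoc, hc32, neg_mul, mul_assoc]
  have Hs1c1 : ∀ t : A, s₁ * (c₁ * t) = c₂ * (s₁ * t) := fun t => by
    rw [← mul_assoc, hs1c1, mul_assoc]
  have Hs1c2 : ∀ t : A, s₁ * (c₂ * t) = c₁ * (s₁ * t) := fun t => by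
    rw [← mul_assoc, hs1c2, mul_assoc]
  have Hs1c3 : ∀ t : A, s₁ * (c₃ * t) = c₃ * (s₁ * t) := fun t => by
    rw [← mul_assoc, hs1c3, mul_assoc]
  have Hs2c1 : ∀ t : A, s₂ * (c₁ * t) = c₁ * (s₂ * t) := fun t => by
    rw [← mul_assoc, hs2c1, mul_assoc]
  have Hs2c2 : ∀ t : A, s₂ * (c₂ * t) = c₃ * (s₂ * t) := fun t => by
    rw [← mul_assoc, hs2c2, mul_assoc]
  have Hs2c3 : ∀ t : A, s₂ * (c₃ * t) = c₂ * (s₂ * t) := fun t => by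
    rw [← mul_assoc, hs2c3, mul_assoc]
  have Hs1 : ∀ t : A, s₁ * (s₁ * t) = t := fun t => by rw [← mul_assoc, hs1, one_mul]
  have Hs2 : ∀ t : A, s₂ * (s₂ * t) = t := fun t => by rw [← mul_assoc, hs2, one_mul]
  have hbr : s₂ * (s₁ * s₂) = s₁ * (s₂ * s₁) := by
    rw [← mul_assoc, ← hbraid, mul_assoc]
  have Hbr : ∀ t : A, s₂ * (s₁ * (s₂ * t)) = s₁ * (s₂ * (s₁ * t)) := fun t => by
    rw [← mul_assoc, ← mul_assoc, ← hbraid, mul_assoc, mul_assoc]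
  simp only [mul_add, add_mul, smul_mul_assoc, mul_smul_comm, one_mul, mul_one,
    mul_assoc, smul_smul]
  simp only [mul_neg, neg_mul, smul_neg, neg_neg, mul_one, one_mul,
    Hc1, Hc2, Hc3, hc1, hc2, hc3, Hc21, hc21, Hc31, hc31, Hc32, hc32,
    Hs1c1, hs1c1, Hs1c2, hs1c2, Hs1c3, hs1c3, Hs2c1, hs2c1, Hs2c2, hs2c2, Hs2c3, hs2c3,
    Hs1, hs1, Hs2, hs2, Hbr, hbr]
  match_scalars <;> field_simp <;> ring
end
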